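/- The set of roots {v ∈ L : B(v,v) = −2, B(v,K) = 0, B(v,C) = 0} is exactly the set {lᵢ − lⱼ : 1 ≤ i,j ≤ n, i ≠ j} ∪ {f − lᵢ − lⱼ : 1 ≤ i < j ≤ n} ∪ {lᵢ + lⱼ − f : 1 ≤ i < j ≤ n}; in particular it has exactly 2n(n−1) elements, the number of roots of Dₙ. -/
import Mathlib


noncomputable section
namespace ADEPaper

/-- The Picard lattice `L = ℤ^{n+2}` with basis `f = e 0`, `s = e 1`, `lᵢ = e_{i+1}` for
`1 ≤ i ≤ n`. -/
abbrev L (n : ℕ) : Type := Fin (n + 2) → ℤ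

/-- The intersection form: `B(f,f) = B(s,s) = 0`, `B(f,s) = 1`, `B(lᵢ,lᵢ) = -1`, all other
pairs of distinct basis vectors orthogonal. -/
def B (n : ℕ) (v w : L n) : ℤ :=
  v 0 * w 1 + v 1 * w 0 - ∑ i : Fin n, v i.succ.succ * w i.succ.succ

/-- The class `f` of a fiber of the ruling. -/
def f (n : ℕ) : L n := fun j => if (j : ℕ) = 0 then 1 else 0

/-- The exceptional class `l i` here denotes `l_{i+1}` of the paper, `i : Fin n`. -/
def l (n : ℕ) (i : Fin n) : L n := fun j => if (j : ℕ) = (i : ℕ) + 2 then 1 else 0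

/-- The canonical class `K = -2f - 2s + l₁ + ⋯ + lₙ`. -/
def K (n : ℕ) : L n := fun j => if (j : ℕ) ≤ 1 then -2 else 1

/-- `C = f`, a fiber of the ruling of the `Dₙ`-surface. -/
def C (n : ℕ) : L n := f n

section Helpers

variable {n : ℕ}

lemma val_ss (k : Fin n) : ((k.succ.succ : Fin (n+2)) : ℕ) = (k : ℕ) + 2 := rfl

@[simp] lemma f_zero : f n 0 = 1 := by simp [f]
@[simp] lemma f_one : f n 1 = 0 := by simp [f, Fin.val_one]
@[simp] lemma f_ss (k : Fin n) : f n k.succ.succ = 0 := by simp [f, val_ss]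
@[simp] lemma l_zero (i : Fin n) : l n i 0 = 0 := by simp [l]
@[simp] lemma l_one (i : Fin n) : l n i 1 = 0 := by simp [l, Fin.val_one]
@[simp] lemma l_ss (i k : Fin n) : l n i k.succ.succ = if k = i then 1 else 0 := by
  simp [l, val_ss, Fin.ext_iff]
@[simp] lemma K_zero : K n 0 = -2 := by simp [K]
@[simp] lemma K_one : K n 1 = -2 := by simp [K, Fin.val_one]
@[simp] lemma K_ss (k : Fin n) : K n k.succ.succ = 1 := by simp [K, val_ss]

lemma fin_decomp (x : Fin (n+2)) : x = 0 ∨ x = 1 ∨ ∃ k : Fin n, x = k.succ.succ := by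
  rcases x with ⟨m, hm⟩
  rcases m with _ | _ | m
  · left; ext; simp
  · right; left; ext; simp [Fin.val_one]
  · right; right
    refine ⟨⟨m, by omega⟩, ?_⟩
    ext; simp [val_ss]

lemma eq_vec {v u : L n} (h0 : v 0 = u 0) (h1 : v 1 = u 1)
    (hss : ∀ k : Fin n, v k.succ.succ = u k.succ.succ) : v = u := by
  funext x
  rcases fin_decomp x with rfl | rfl | ⟨k, rfl⟩
  exacts [h0, h1, hss k]

lemma not_sq_two (m : ℤ) : m * m ≠ 2 := by
  intro h
  have h1 : m ≤ 1 := by nlinarith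
  have h2 : -1 ≤ m := by nlinarith
  interval_cases m <;> omega

lemma sum_sq_eq_two {w : Fin n → ℤ} (h : ∑ k : Fin n, w k * w k = 2) :
    ∃ i j : Fin n, i ≠ j ∧ w i * w i = 1 ∧ w j * w j = 1 ∧
      ∀ k, k ≠ i → k ≠ j → w k = 0 := by
  classical
  set s := Finset.univ.filter (fun k => w k ≠ 0) with hs
  have hsum : ∑ k ∈ s, w k * w k = 2 := by
    rw [← h]
    exact Finset.sum_filter_of_ne (fun k _ hk h0 => hk (by rw [h0, mul_zero]))
  have hone : ∀ k ∈ s, 1 ≤ w k * w k := by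
    intro k hk
    have hk0 : w k ≠ 0 := (Finset.mem_filter.mp hk).2
    rcases hk0.lt_or_gt with h' | h' <;> nlinarith
  have hcard : s.card ≤ 2 := by
    have := Finset.card_nsmul_le_sum s (fun k => w k * w k) 1 hone
    simpa [hsum] using this
  have h2 : s.card = 2 := by
    by_contra hne
    have h01 : s.card = 0 ∨ s.card = 1 := by omega
    rcases h01 with h0 | h1
    · rw [Finset.card_eq_zero] at h0
      rw [h0] at hsum; simp at hsum
    · obtain ⟨i, hi⟩ := Finset.card_eq_one.mp h1
      rw [hi, Finset.sum_singleton] at hsum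
      exact not_sq_two _ hsum
  obtain ⟨i, j, hij, hsij⟩ := Finset.card_eq_two.mp h2
  rw [hsij, Finset.sum_pair hij] at hsum
  have hi1 : 1 ≤ w i * w i := hone i (by rw [hsij]; simp)
  have hj1 : 1 ≤ w j * w j := hone j (by rw [hsij]; simp)
  refine ⟨i, j, hij, by linarith, by linarith, fun k hki hkj => ?_⟩
  by_contra hk
  have hmem : k ∈ s := Finset.mem_filter.mpr ⟨Finset.mem_univ _, hk⟩
  rw [hsij] at hmem
  simp only [Finset.mem_insert, Finset.mem_singleton] at hmem
  tauto

lemma root_of (a b c : ℤ) (i j : Fin n) (hij : i ≠ j) (hb : b * b = 1) (hc : c * c = 1)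
    (ha : 2 * a + b + c = 0) (v : L n) (h0 : v 0 = a) (h1 : v 1 = 0)
    (hss : ∀ k : Fin n, v k.succ.succ
      = b * (if k = i then 1 else 0) + c * (if k = j then 1 else 0)) :
    B n v v = -2 ∧ B n v (K n) = 0 ∧ B n v (C n) = 0 := by
  classical
  have key : ∀ k : Fin n, v k.succ.succ * v k.succ.succ
      = b * b * (if k = i then 1 else 0) + c * c * (if k = j then 1 else 0) := by
    intro k
    rw [hss k]
    by_cases hk1 : k = i <;> by_cases hk2 : k = j
    · exact absurd (hk1.symm.trans hk2) hij
    · simp [hk1, hk2, hij, hij.symm]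
    · simp [hk1, hk2, hij, hij.symm]
    · simp [hk1, hk2]
  have hsum1 : ∑ k : Fin n, v k.succ.succ * v k.succ.succ = 2 := by
    rw [Finset.sum_congr rfl fun k _ => key k, Finset.sum_add_distrib]
    simp only [← Finset.mul_sum]
    simp [Finset.sum_ite_eq', hb, hc]
  have hsum2 : ∑ k : Fin n, v k.succ.succ = b + c := by
    rw [Finset.sum_congr rfl fun k _ => hss k, Finset.sum_add_distrib]
    simp only [← Finset.mul_sum]
    simp [Finset.sum_ite_eq']
  refine ⟨?_, ?_, ?_⟩
  · simp only [B, hsum1, h0, h1]; ring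
  · simp only [B, K_zero, K_one, K_ss, mul_one, h0, h1, hsum2]; linarith
  · simp only [B, C, f_zero, f_one, f_ss, mul_zero, mul_one, h1]
    simp

lemma ind_sub {i j i' j' : Fin n} (hij : i ≠ j) (hij' : i' ≠ j')
    (h : ∀ k : Fin n, (if k = i then (1:ℤ) else 0) - (if k = j then 1 else 0)
      = (if k = i' then 1 else 0) - (if k = j' then 1 else 0)) : i = i' ∧ j = j' := by
  constructor
  · by_contra hc
    have h1 := h i
    split_ifs at h1 <;> first | omega | simp_all
  · by_contra hc
    have h1 := h j
    split_ifs at h1 <;> first | omega | simp_all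

lemma ind_add {i j i' j' : Fin n} (hij : i ≠ j)
    (h : ∀ k : Fin n, (if k = i then (1:ℤ) else 0) + (if k = j then 1 else 0)
      = (if k = i' then 1 else 0) + (if k = j' then 1 else 0)) :
    (i = i' ∧ j = j') ∨ (i = j' ∧ j = i') := by
  have hi : i = i' ∨ i = j' := by
    by_contra hc
    push_neg at hc
    have h1 := h i
    simp [hij, hc.1, hc.2] at h1
  have hj : j = i' ∨ j = j' := by
    by_contra hc
    push_neg at hc
    have h1 := h j
    simp [Ne.symm hij, hc.1, hc.2] at h1
  rcases hi with h1 | h1 <;> rcases hj with h2 | h2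
  · exact absurd (h1.trans h2.symm) hij
  · exact Or.inl ⟨h1, h2⟩
  · exact Or.inr ⟨h1, h2⟩
  · exact absurd (h1.trans h2.symm) hij

/-- ordered distinct pairs -/
def D (n : ℕ) : Finset (Fin n × Fin n) := Finset.univ.filter fun p => p.1 ≠ p.2

def g1 (n : ℕ) (p : Fin n × Fin n) : L n := l n p.1 - l n p.2

def g2 (n : ℕ) (p : Fin n × Fin n) : L n :=
  if p.1 < p.2 then f n - l n p.1 - l n p.2 else l n p.1 + l n p.2 - f n

lemma mem_D {p : Fin n × Fin n} : p ∈ D n ↔ p.1 ≠ p.2 := by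
  simp [D]

lemma inj1 : Set.InjOn (g1 n) ↑(D n) := by
  rintro ⟨i, j⟩ hij ⟨i', j'⟩ hij' h
  rw [Finset.mem_coe, mem_D] at hij hij'
  have h' : ∀ k : Fin n, (if k = i then (1:ℤ) else 0) - (if k = j then 1 else 0)
      = (if k = i' then 1 else 0) - (if k = j' then 1 else 0) := by
    intro k
    have := congrFun h k.succ.succ
    simpa [g1] using this
  obtain ⟨h1, h2⟩ := ind_sub hij hij' h'
  simp only [Prod.mk.injEq]
  exact ⟨h1, h2⟩

lemma inj2 : Set.InjOn (g2 n) ↑(D n) := by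
  rintro ⟨i, j⟩ hij ⟨i', j'⟩ hij' h
  rw [Finset.mem_coe, mem_D] at hij hij'
  simp only at hij hij'
  by_cases hp : i < j <;> by_cases hq : i' < j'
  · have h' : ∀ k : Fin n, (if k = i then (1:ℤ) else 0) + (if k = j then 1 else 0)
        = (if k = i' then 1 else 0) + (if k = j' then 1 else 0) := by
      intro k
      have := congrFun h k.succ.succ
      simp only [g2, if_pos hp, if_pos hq, Pi.sub_apply, f_ss, l_ss] at this
      linarith
    rcases ind_add hij h' with ⟨h1, h2⟩ | ⟨h1, h2⟩
    · simp only [Prod.mk.injEq]; exact ⟨h1, h2⟩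
    · exfalso; rw [h1, h2] at hp; exact absurd hp hq.asymm
  · exfalso
    have := congrFun h 0
    simp [g2, hp, hq] at this
  · exfalso
    have := congrFun h 0
    simp [g2, hp, hq] at this
  · have h' : ∀ k : Fin n, (if k = i then (1:ℤ) else 0) + (if k = j then 1 else 0)
        = (if k = i' then 1 else 0) + (if k = j' then 1 else 0) := by
      intro k
      have := congrFun h k.succ.succ
      simp only [g2, if_neg hp, if_neg hq, Pi.sub_apply, Pi.add_apply, f_ss, l_ss] at this
      linarith
    rcases ind_add hij h' with ⟨h1, h2⟩ | ⟨h1, h2⟩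
    · simp only [Prod.mk.injEq]; exact ⟨h1, h2⟩
    · exfalso
      have hji : j < i := hij.lt_or_gt.resolve_left hp
      have hji' : j' < i' := hij'.lt_or_gt.resolve_left hq
      rw [h1, h2] at hji
      exact absurd hji hji'.asymm

lemma disj12 : Disjoint ((D n).image (g1 n)) ((D n).image (g2 n)) := by
  rw [Finset.disjoint_left]
  rintro v hv1 hv2
  obtain ⟨p, hp, rfl⟩ := Finset.mem_image.mp hv1
  obtain ⟨q, hq, hqe⟩ := Finset.mem_image.mp hv2
  have := congrFun hqe 0
  by_cases hl : q.1 < q.2 <;> simp [g1, g2, hl] at this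

lemma D_card : (D n).card = n * n - n := by
  classical
  have himg : Finset.univ.filter (fun p : Fin n × Fin n => p.1 = p.2)
      = Finset.univ.image (fun i : Fin n => (i, i)) := by
    ext ⟨a, b⟩
    simp only [Finset.mem_filter, Finset.mem_univ, true_and, Finset.mem_image, Prod.mk.injEq]
    constructor
    · rintro rfl; exact ⟨a, rfl, rfl⟩
    · rintro ⟨i, rfl, rfl⟩; rfl
  have h1 : (Finset.univ.filter (fun p : Fin n × Fin n => p.1 = p.2)).card = n := by
    rw [himg, Finset.card_image_of_injective]
    · simp
    · intro a b hab
      exact congrArg Prod.fst hab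
  have h2 := Finset.card_filter_add_card_filter_not
    (s := (Finset.univ : Finset (Fin n × Fin n))) (p := fun p => p.1 = p.2)
  have h3 : (Finset.univ : Finset (Fin n × Fin n)).card = n * n := by
    simp [Fintype.card_prod]
  have h4 : n + (D n).card = n * n := by
    rw [← h3, ← h2, h1]
    rfl
  exact Nat.eq_sub_of_add_eq' h4

lemma rhs_eq (n : ℕ) :
    ({v : L n | ∃ i j : Fin n, i ≠ j ∧ v = l n i - l n j}
      ∪ {v : L n | ∃ i j : Fin n, i < j ∧ v = f n - l n i - l n j}
      ∪ {v : L n | ∃ i j : Fin n, i < j ∧ v = l n i + l n j - f n})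
    = ↑((D n).image (g1 n) ∪ (D n).image (g2 n)) := by
  classical
  ext v
  simp only [Set.mem_union, Set.mem_setOf_eq, Finset.coe_union, Finset.mem_coe,
    Finset.mem_union, Finset.mem_image]
  constructor
  · rintro ((⟨i, j, hij, rfl⟩ | ⟨i, j, hij, rfl⟩) | ⟨i, j, hij, rfl⟩)
    · exact Or.inl ⟨(i, j), mem_D.mpr hij, rfl⟩
    · exact Or.inr ⟨(i, j), mem_D.mpr (ne_of_lt hij), by simp [g2, hij]⟩
    · refine Or.inr ⟨(j, i), mem_D.mpr (ne_of_gt hij), ?_⟩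
      simp only [g2, if_neg (not_lt.mpr hij.le)]
      ring
  · rintro (⟨p, hp, rfl⟩ | ⟨p, hp, rfl⟩)
    · exact Or.inl (Or.inl ⟨p.1, p.2, mem_D.mp hp, rfl⟩)
    · by_cases hlt : p.1 < p.2
      · exact Or.inl (Or.inr ⟨p.1, p.2, hlt, by simp [g2, hlt]⟩)
      · have h2 : p.2 < p.1 := (mem_D.mp hp).lt_or_gt.resolve_left hlt
        refine Or.inr ⟨p.2, p.1, h2, ?_⟩
        simp only [g2, if_neg hlt]
        ring

end Helpers

/-- The set of roots on a `Dₙ`-surface (`n ≥ 3`) is exactly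
`{lᵢ - lⱼ : i ≠ j} ∪ {f - lᵢ - lⱼ : i < j} ∪ {lᵢ + lⱼ - f : i < j}`; in particular it has
exactly `2n(n-1)` elements, the number of roots of `Dₙ`. -/
theorem Dn_roots (n : ℕ) (hn : 3 ≤ n) :
    {v : L n | B n v v = -2 ∧ B n v (K n) = 0 ∧ B n v (C n) = 0}
      = {v : L n | ∃ i j : Fin n, i ≠ j ∧ v = l n i - l n j}
        ∪ {v : L n | ∃ i j : Fin n, i < j ∧ v = f n - l n i - l n j}
        ∪ {v : L n | ∃ i j : Fin n, i < j ∧ v = l n i + l n j - f n} ∧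
    {v : L n | B n v v = -2 ∧ B n v (K n) = 0 ∧ B n v (C n) = 0}.ncard = 2 * n * (n - 1) := by
  classical
  have hE : {v : L n | B n v v = -2 ∧ B n v (K n) = 0 ∧ B n v (C n) = 0}
      = {v : L n | ∃ i j : Fin n, i ≠ j ∧ v = l n i - l n j}
        ∪ {v : L n | ∃ i j : Fin n, i < j ∧ v = f n - l n i - l n j}
        ∪ {v : L n | ∃ i j : Fin n, i < j ∧ v = l n i + l n j - f n} := by
    ext v
    simp only [Set.mem_setOf_eq, Set.mem_union]
    constructor
    · rintro ⟨hvv, hvK, hvC⟩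
      have hv1 : v 1 = 0 := by
        have h := hvC
        simp only [B, C, f_zero, f_one, f_ss, mul_zero, mul_one] at h
        simpa using h
      have hK' : ∑ k : Fin n, v k.succ.succ = -2 * v 0 := by
        have h := hvK
        simp only [B, K_zero, K_one, K_ss, mul_one] at h
        rw [hv1] at h
        linarith
      have hvv' : ∑ k : Fin n, v k.succ.succ * v k.succ.succ = 2 := by
        have h := hvv
        simp only [B] at h
        rw [hv1] at h
        linarith
      obtain ⟨i, j, hij, hii, hjj, hz⟩ :=
        sum_sq_eq_two (w := fun k : Fin n => v k.succ.succ) hvv'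
      have hS : ∑ k : Fin n, v k.succ.succ = v i.succ.succ + v j.succ.succ := by
        rw [← Finset.sum_pair (f := fun k : Fin n => v k.succ.succ) hij]
        refine (Finset.sum_subset (Finset.subset_univ _) ?_).symm
        intro k _ hk
        simp only [Finset.mem_insert, Finset.mem_singleton, not_or] at hk
        exact hz k hk.1 hk.2
      rcases mul_self_eq_one_iff.mp hii with hi | hi <;>
        rcases mul_self_eq_one_iff.mp hjj with hj | hj
      · -- both +1 : v = lᵢ + lⱼ - f
        have h0 : v 0 = -1 := by
          rw [hS, hi, hj] at hK'; linarith
        have hv : v = l n i + l n j - f n := by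
          refine eq_vec ?_ ?_ ?_
          · simp [h0]
          · simp [hv1]
          · intro k
            simp only [Pi.sub_apply, Pi.add_apply, l_ss, f_ss, sub_zero]
            by_cases hk1 : k = i
            · subst hk1; simp [hij, hi]
            · by_cases hk2 : k = j
              · subst hk2; simp [hk1, hj]
              · simp [hk1, hk2, hz k hk1 hk2]
        rcases hij.lt_or_gt with hlt | hlt
        · exact Or.inr ⟨i, j, hlt, hv⟩
        · refine Or.inr ⟨j, i, hlt, ?_⟩
          rw [hv]; ring
      · -- +1, -1 : v = lᵢ - lⱼ
        have h0 : v 0 = 0 := by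
          rw [hS, hi, hj] at hK'; linarith
        refine Or.inl (Or.inl ⟨i, j, hij, eq_vec ?_ ?_ ?_⟩)
        · simp [h0]
        · simp [hv1]
        · intro k
          simp only [Pi.sub_apply, l_ss]
          by_cases hk1 : k = i
          · subst hk1; simp [hij, hi]
          · by_cases hk2 : k = j
            · subst hk2; simp [hk1, hj]
            · simp [hk1, hk2, hz k hk1 hk2]
      · -- -1, +1 : v = lⱼ - lᵢ
        have h0 : v 0 = 0 := by
          rw [hS, hi, hj] at hK'; linarith
        refine Or.inl (Or.inl ⟨j, i, hij.symm, eq_vec ?_ ?_ ?_⟩)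
        · simp [h0]
        · simp [hv1]
        · intro k
          simp only [Pi.sub_apply, l_ss]
          by_cases hk2 : k = j
          · subst hk2; simp [Ne.symm hij, hj]
          · by_cases hk1 : k = i
            · subst hk1; simp [hk2, hi]
            · simp [hk1, hk2, hz k hk1 hk2]
      · -- both -1 : v = f - lᵢ - lⱼ
        have h0 : v 0 = 1 := by
          rw [hS, hi, hj] at hK'; linarith
        have hv : v = f n - l n i - l n j := by
          refine eq_vec ?_ ?_ ?_
          · simp [h0]
          · simp [hv1]
          · intro k
            simp only [Pi.sub_apply, l_ss, f_ss]
            by_cases hk1 : k = i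
            · subst hk1; simp [hij, hi]
            · by_cases hk2 : k = j
              · subst hk2; simp [hk1, hj]
              · simp [hk1, hk2, hz k hk1 hk2]
        rcases hij.lt_or_gt with hlt | hlt
        · exact Or.inl (Or.inr ⟨i, j, hlt, hv⟩)
        · refine Or.inl (Or.inr ⟨j, i, hlt, ?_⟩)
          rw [hv]; ring
    · rintro ((⟨i, j, hij, rfl⟩ | ⟨i, j, hij, rfl⟩) | ⟨i, j, hij, rfl⟩)
      · refine root_of 0 1 (-1) i j hij (by ring) (by ring) (by ring) _ (by simp) (by simp) ?_
        intro k
        simp only [Pi.sub_apply, l_ss]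
        ring
      · refine root_of 1 (-1) (-1) i j (ne_of_lt hij) (by ring) (by ring) (by ring) _
          (by simp) (by simp) ?_
        intro k
        simp only [Pi.sub_apply, l_ss, f_ss]
        ring
      · refine root_of (-1) 1 1 i j (ne_of_lt hij) (by ring) (by ring) (by ring) _
          (by simp) (by simp) ?_
        intro k
        simp only [Pi.sub_apply, Pi.add_apply, l_ss, f_ss]
        ring
  refine ⟨hE, ?_⟩
  rw [hE, rhs_eq n, Set.ncard_coe_finset,
    Finset.card_union_of_disjoint disj12,
    Finset.card_image_of_injOn inj1, Finset.card_image_of_injOn inj2, D_card]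
  have hnn : n * n - n = (n - 1) * n := by
    rw [Nat.sub_mul, one_mul]
  rw [hnn]
  ring

end ADEPaper
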